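/- arXiv:2512.24690 — 6 statements merged into one kernel-verified Lean document; each statement's English description precedes it below -/
import Mathlib

section
/- The lattice counting zeta function of ℤ^n equals the product of shifted Riemann zeta functions: ∑_{L ⊆ ℤ^n, finite index} [ℤ^n : L]^{-s} = ζ(s)·ζ(s-1)···ζ(s-n+1) for Re(s) > n. -/
/-!
A finite-index subgroup `K` of `ℤ × H` is determined by the positive generator `d` of its
projection to `ℤ`, its intersection `L` with `H`, and the class modulo `L` of any `h` with
`(d, h) ∈ K`; conversely every such triple `(d, L, x)` occurs, and `[ℤ × H : K] = d · [H : L]`.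
As each `L` carries `[H : L]` classes `x`, the sum of `[ℤ × H : K]^{-s}` is
`ζ(s) · ∑_L [H : L]^{-(s-1)}`, and induction on `n` gives the product of shifted zeta values.
-/

open AddSubgroup

theorem AddSubgroup.index_eq_index_map_fst_mul_index_comap_inr {A B : Type*} [AddGroup A]
    [AddGroup B] (L : AddSubgroup (A × B)) [L.Normal] :
    L.index = (L.map (AddMonoidHom.fst A B)).index * (L.comap (AddMonoidHom.inr A B)).index := by
  have hker : (AddMonoidHom.inr A B).range = (AddMonoidHom.fst A B).ker := by
    ext ⟨a, b⟩; simp [eq_comm, mem_prod]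
  rw [index_map, AddMonoidHom.range_eq_top_of_surjective _ Prod.fst_surjective, index_top,
    mul_one, index_comap, hker, ← relIndex_sup_right, mul_comm, sup_comm,
    relIndex_mul_index le_sup_left]

theorem Int.exists_pnat_eq_zmultiples {J : AddSubgroup ℤ} (hJ : J.index ≠ 0) :
    ∃ d : ℕ+, J = zmultiples ((d : ℕ) : ℤ) := by
  obtain ⟨a, rfl⟩ := Int.subgroup_cyclic J
  rw [← zmultiples_eq_closure, ← Int.zmultiples_natAbs] at hJ ⊢
  rw [Int.index_zmultiples, Int.natAbs_natCast] at hJ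
  exact ⟨⟨a.natAbs, Nat.pos_of_ne_zero hJ⟩, rfl⟩

abbrev FiniteIndexAddSubgroup (G : Type*) [AddGroup G] := {L : AddSubgroup G // L.index ≠ 0}

def AddEquiv.finiteIndexAddSubgroupCongr {A B : Type*} [AddGroup A] [AddGroup B] (e : A ≃+ B) :
    FiniteIndexAddSubgroup A ≃ FiniteIndexAddSubgroup B :=
  e.mapAddSubgroup.toEquiv.subtypeEquiv fun L => by
    simp [AddEquiv.mapAddSubgroup, index_map_equiv]

section intProdSubgroup

variable {H : Type*} [AddCommGroup H]

def intProdSubgroup (d : ℕ+) (L : AddSubgroup H) (x : H ⧸ L) : AddSubgroup (ℤ × H) :=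
  (zmultiples (((d : ℕ) : ℤ), x)).comap ((AddMonoidHom.id ℤ).prodMap (QuotientAddGroup.mk' L))

variable {d : ℕ+} {L : AddSubgroup H} {x : H ⧸ L}

theorem mem_intProdSubgroup {a : ℤ} {h : H} :
    (a, h) ∈ intProdSubgroup d L x ↔ ∃ k : ℤ, k * d = a ∧ k • x = h := by
  simp [intProdSubgroup, mem_zmultiples_iff]

theorem map_fst_intProdSubgroup :
    (intProdSubgroup d L x).map (AddMonoidHom.fst ℤ H) = zmultiples ((d : ℕ) : ℤ) := by
  ext a
  simp only [mem_map, Prod.exists, AddMonoidHom.coe_fst, exists_and_right, exists_eq_right,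
    mem_intProdSubgroup, mem_zmultiples_iff, smul_eq_mul]
  exact ⟨fun ⟨_, k, hk, _⟩ => ⟨k, hk⟩, fun ⟨k, hk⟩ => ⟨(k • x).out, k, hk, by simp⟩⟩

theorem comap_inr_intProdSubgroup :
    (intProdSubgroup d L x).comap (AddMonoidHom.inr ℤ H) = L := by
  ext h
  simp [mem_intProdSubgroup, eq_comm (b := (h : H ⧸ L))]

theorem index_intProdSubgroup : (intProdSubgroup d L x).index = d * L.index := by
  rw [index_eq_index_map_fst_mul_index_comap_inr, map_fst_intProdSubgroup,
    comap_inr_intProdSubgroup, Int.index_zmultiples, Int.natAbs_natCast]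

variable (H) in
def intProdSubgroupMap :
    (Σ p : ℕ+ × FiniteIndexAddSubgroup H, H ⧸ (p.2 : AddSubgroup H)) →
      FiniteIndexAddSubgroup (ℤ × H) :=
  fun q => ⟨intProdSubgroup q.1.1 q.1.2 q.2, by
    rw [index_intProdSubgroup]; exact mul_ne_zero q.1.1.ne_zero q.1.2.2⟩

theorem intProdSubgroupMap_injective : Function.Injective (intProdSubgroupMap H) := by
  rintro ⟨⟨d, L, hL⟩, x⟩ ⟨⟨e, M, hM⟩, y⟩ hS
  replace hS : intProdSubgroup d L x = intProdSubgroup e M y := congrArg Subtype.val hS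
  obtain rfl : d = e := PNat.coe_injective <| by
    simpa [map_fst_intProdSubgroup] using
      congrArg (fun S => (S.map (AddMonoidHom.fst ℤ H)).index) hS
  obtain rfl : L = M := by
    simpa [comap_inr_intProdSubgroup] using congrArg (comap (AddMonoidHom.inr ℤ H)) hS
  obtain rfl : x = y := by
    have hx : (((d : ℕ) : ℤ), x.out) ∈ intProdSubgroup d L y :=
      hS ▸ mem_intProdSubgroup.mpr ⟨1, by simp, by simp⟩
    obtain ⟨k, hk, hky⟩ := mem_intProdSubgroup.mp hx
    obtain rfl : k = 1 := (mul_eq_right₀ (by positivity)).mp hk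
    simpa using hky.symm
  rfl

theorem intProdSubgroupMap_surjective : Function.Surjective (intProdSubgroupMap H) := by
  rintro ⟨K, hK⟩
  have hidx := index_eq_index_map_fst_mul_index_comap_inr K
  obtain ⟨d, hd⟩ := Int.exists_pnat_eq_zmultiples (left_ne_zero_of_mul (hidx ▸ hK))
  set L := K.comap (AddMonoidHom.inr ℤ H)
  obtain ⟨⟨_, h⟩, hmem, rfl⟩ : ((d : ℕ) : ℤ) ∈ K.map (AddMonoidHom.fst ℤ H) :=
    hd ▸ mem_zmultiples _
  refine ⟨⟨(d, ⟨L, right_ne_zero_of_mul (hidx ▸ hK)⟩), h⟩, Subtype.ext ?_⟩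
  change intProdSubgroup d L h = K
  have hle : intProdSubgroup d L h ≤ K := by
    rintro ⟨_, b⟩ hb
    obtain ⟨k, rfl, hk⟩ := mem_intProdSubgroup.mp hb
    have hbL : b - k • h ∈ L := by
      rw [← QuotientAddGroup.eq_zero_iff, QuotientAddGroup.mk_sub, QuotientAddGroup.mk_zsmul, hk,
        sub_self]
    convert add_mem (zsmul_mem hmem k) hbL using 1
    ext <;> simp
  refine le_antisymm hle ?_
  rw [← relIndex_eq_one, ← mul_eq_right₀ hK, relIndex_mul_index hle, index_intProdSubgroup, hidx,
    hd, Int.index_zmultiples, Int.natAbs_natCast]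

variable (H) in
noncomputable def intProdSubgroupEquiv :
    (Σ p : ℕ+ × FiniteIndexAddSubgroup H, H ⧸ (p.2 : AddSubgroup H)) ≃
      FiniteIndexAddSubgroup (ℤ × H) :=
  Equiv.ofBijective _ ⟨intProdSubgroupMap_injective, intProdSubgroupMap_surjective⟩

end intProdSubgroup

theorem hasSum_sigma_of_hasSum_card_nsmul {E β : Type*} {γ : β → Type*} [NormedAddCommGroup E]
    [NormedSpace ℝ E] [FiniteDimensional ℝ E] [∀ b, Finite (γ b)] {f : β → E} {a : E}
    (hf : HasSum (fun b => Nat.card (γ b) • f b) a) :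
    HasSum (fun q : Σ b, γ b => f q.1) a := by
  have hfiber (b : β) : HasSum (fun _ : γ b => f b) (Nat.card (γ b) • f b) :=
    tsum_const (f b) ▸ Summable.of_finite.hasSum
  refine hf.sigma_of_hasSum hfiber (summable_norm_iff.mp ?_)
  refine (summable_sigma_of_nonneg fun _ => norm_nonneg _).mpr ⟨fun _ => .of_finite, ?_⟩
  simpa only [tsum_const, RCLike.norm_nsmul ℝ] using hf.summable.norm

theorem hasSum_pnat_cpow_neg_riemannZeta {s : ℂ} (hs : 1 < s.re) :
    HasSum (fun d : ℕ+ => ((d : ℕ) : ℂ) ^ (-s)) (riemannZeta s) := by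
  have hzero : ∀ n ∉ Set.range PNat.val, LSeries.term 1 s n = 0 := fun n hn => by
    obtain rfl : n = 0 := by_contra fun h => hn ⟨⟨n, Nat.pos_of_ne_zero h⟩, rfl⟩
    simp
  convert (PNat.coe_injective.hasSum_iff hzero).mpr (LSeriesHasSum_one hs) using 1
  ext d
  simp [Complex.cpow_neg]

theorem natCast_nsmul_cpow_neg_mul (d : ℕ) {m : ℕ} (hm : m ≠ 0) (s : ℂ) :
    m • ((d * m : ℕ) : ℂ) ^ (-s) = (d : ℂ) ^ (-s) * (m : ℂ) ^ (-(s - 1)) := by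
  rw [nsmul_eq_mul, Nat.cast_mul, Complex.natCast_mul_natCast_cpow, neg_sub, sub_eq_add_neg,
    Complex.cpow_add _ _ (Nat.cast_ne_zero.mpr hm), Complex.cpow_one]
  ring

theorem HasSum.index_cpow_neg_int_prod {H : Type*} [AddCommGroup H] {s z : ℂ} (hs : 1 < s.re)
    (hH : HasSum (fun L : FiniteIndexAddSubgroup H => (L.1.index : ℂ) ^ (-(s - 1))) z) :
    HasSum (fun K : FiniteIndexAddSubgroup (ℤ × H) => (K.1.index : ℂ) ^ (-s))
      (riemannZeta s * z) := by
  have hζ := hasSum_pnat_cpow_neg_riemannZeta hs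
  have hsum := summable_mul_of_summable_norm (R := ℂ) hζ.summable.norm hH.summable.norm
  have hprod := hζ.mul hH hsum
  have (p : ℕ+ × FiniteIndexAddSubgroup H) : Finite (H ⧸ (p.2 : AddSubgroup H)) :=
    Nat.finite_of_card_ne_zero p.2.2
  have hcomp : (fun K : FiniteIndexAddSubgroup (ℤ × H) => (K.1.index : ℂ) ^ (-s)) ∘
      intProdSubgroupEquiv H = fun q => (((q.1.1 : ℕ) * q.1.2.1.index : ℕ) : ℂ) ^ (-s) :=
    funext fun q => congrArg (fun m : ℕ => (m : ℂ) ^ (-s)) index_intProdSubgroup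
  rw [← (intProdSubgroupEquiv H).hasSum_iff, hcomp]
  refine hasSum_sigma_of_hasSum_card_nsmul
    (f := fun p : ℕ+ × FiniteIndexAddSubgroup H => (((p.1 : ℕ) * p.2.1.index : ℕ) : ℂ) ^ (-s)) ?_
  exact hprod.congr_fun fun p => natCast_nsmul_cpow_neg_mul _ p.2.2 s

theorem hasSum_index_cpow_neg_pi_int {n : ℕ} {s : ℂ} (hs : (n : ℝ) < s.re) :
    HasSum (fun L : FiniteIndexAddSubgroup (Fin n → ℤ) => (L.1.index : ℂ) ^ (-s))
      (∏ k ∈ Finset.range n, riemannZeta (s - k)) := by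
  induction n generalizing s with
  | zero =>
    have htop (L : FiniteIndexAddSubgroup (Fin 0 → ℤ)) : L.1 = ⊤ := Subsingleton.elim _ _
    have : Unique (FiniteIndexAddSubgroup (Fin 0 → ℤ)) :=
      ⟨⟨⟨⊤, by simp⟩⟩, fun L => Subtype.ext (htop L)⟩
    simp [htop]
  | succ n ih =>
    push_cast at hs
    have hs1 : 1 < s.re := by linarith [n.cast_nonneg (α := ℝ)]
    have hs' : (n : ℝ) < (s - 1).re := by simp only [Complex.sub_re, Complex.one_re]; linarith
    rw [← (Fin.consLinearEquiv ℤ fun _ => ℤ).toAddEquiv.finiteIndexAddSubgroupCongr.hasSum_iff,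
      Finset.prod_range_succ']
    convert (ih hs').index_cpow_neg_int_prod hs1 using 1
    · ext L
      simp [AddEquiv.finiteIndexAddSubgroupCongr]
    · simp [mul_comm, sub_sub, add_comm]

theorem zeta_of_int_lattice_general (n : ℕ) (s : ℂ) (hs : (n : ℝ) < s.re) :
    ∑' L : {L : AddSubgroup (Fin n → ℤ) // L.index ≠ 0},
        ((L : AddSubgroup (Fin n → ℤ)).index : ℂ) ^ (-s)
      = ∏ k ∈ Finset.range n, riemannZeta (s - k) :=
  (hasSum_index_cpow_neg_pi_int hs).tsum_eq

/-- The lattice counting zeta function of `ℤ^n`: the sum of `[ℤ^n : L]^{-s}` over all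
finite-index subgroups `L` of `ℤ^n` equals `ζ(s)·ζ(s-1)···ζ(s-n+1)` for `Re(s) > n`. -/
theorem zeta_of_int_lattice (n : ℕ) (hn : 1 ≤ n) (s : ℂ) (hs : (n : ℝ) < s.re) :
    ∑' L : {L : AddSubgroup (Fin n → ℤ) // L.index ≠ 0},
        ((L : AddSubgroup (Fin n → ℤ)).index : ℂ) ^ (-s)
      = ∏ k ∈ Finset.range n, riemannZeta (s - k) :=
  zeta_of_int_lattice_general n s hs
end

section
/- For fixed d ∈ [1,ℓ−1] and ε ∈ {+1,−1}, the minimum of μ^{(ε)}(K) := ∑_{k∈K} k(k−ε)/2 + N(K) over all subsets K ⊆ [1,ℓ−1] with #K = d is attained only at K = [1,d], and equals (1/6)·d(d+1)(d + (7−3ε)/2). -/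
open scoped Classical

/-- `I` is a maximal interval of consecutive integers contained in `K`. -/
def IsMaxInterval (K I : Finset ℕ) : Prop :=
  ∃ a b : ℕ, a ≤ b ∧ I = Finset.Icc a b ∧ I ⊆ K ∧
    (∀ c : ℕ, c + 1 = a → c ∉ K) ∧ b + 1 ∉ K

/-- The collection `𝓘_K` of maximal integer intervals contained in `K`. -/
noncomputable def maxIntervals (K : Finset ℕ) : Finset (Finset ℕ) :=
  K.powerset.filter (IsMaxInterval K)

/-- `N(K) := ∑_{I ∈ 𝓘_K} #I(#I+1)/2`. -/
noncomputable def Nstat (K : Finset ℕ) : ℕ :=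
  ∑ I ∈ maxIntervals K, I.card * (I.card + 1) / 2

/-- `μ^{(ε)}(K) := ∑_{k ∈ K} k(k−ε)/2 + N(K)`. -/
noncomputable def mueps (ε : ℤ) (K : Finset ℕ) : ℚ :=
  (∑ k ∈ K, (k : ℚ) * ((k : ℚ) - (ε : ℚ)) / 2) + (Nstat K : ℚ)

/-- Length of the maximal run of consecutive integers of `K` ending at `k` (counts the
number of `i ≤ k` with `Icc i k ⊆ K`). -/
noncomputable def runlen (K : Finset ℕ) (k : ℕ) : ℕ :=
  ((Finset.range (k + 1)).filter (fun i => Finset.Icc i k ⊆ K)).card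

lemma runlen_pos {K : Finset ℕ} {k : ℕ} (hk : k ∈ K) : 1 ≤ runlen K k := by
  have hmem : k ∈ (Finset.range (k + 1)).filter (fun i => Finset.Icc i k ⊆ K) := by
    simp only [Finset.mem_filter, Finset.mem_range]
    exact ⟨Nat.lt_succ_self k, by simpa [Finset.Icc_self] using hk⟩
  exact Finset.card_pos.mpr ⟨k, hmem⟩

lemma runlen_subset_eq {K' K : Finset ℕ} (h : K' ⊆ K) {k : ℕ}
    (hk : ∀ x ∈ K, x ≤ k → x ∈ K') : runlen K' k = runlen K k := by
  unfold runlen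
  congr 1
  apply Finset.filter_congr
  intro i _
  constructor
  · intro hs x hx; exact h (hs hx)
  · intro hs x hx; exact hk x (hs hx) (Finset.mem_Icc.mp hx).2

lemma runlen_top {K : Finset ℕ} {a M : ℕ} (haM : a ≤ M) (hsub : Finset.Icc a M ⊆ K)
    (hprev : ∀ c, c + 1 = a → c ∉ K) {k : ℕ} (hk : k ∈ Finset.Icc a M) :
    runlen K k = k + 1 - a := by
  obtain ⟨hak, hkM⟩ := Finset.mem_Icc.mp hk
  have hfe : (Finset.range (k + 1)).filter (fun i => Finset.Icc i k ⊆ K)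
      = Finset.Icc a k := by
    ext i
    simp only [Finset.mem_filter, Finset.mem_range, Finset.mem_Icc, Nat.lt_succ_iff]
    constructor
    · rintro ⟨hik, hIcc⟩
      refine ⟨?_, hik⟩
      by_contra hia
      push_neg at hia
      have ha1 : a - 1 + 1 = a := by omega
      exact hprev (a - 1) ha1 (hIcc (Finset.mem_Icc.mpr ⟨by omega, by omega⟩))
    · rintro ⟨hai, hik⟩
      exact ⟨hik, fun x hx => hsub (Finset.mem_Icc.mpr
        ⟨le_trans hai (Finset.mem_Icc.mp hx).1, le_trans (Finset.mem_Icc.mp hx).2 hkM⟩)⟩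
  rw [runlen, hfe, Nat.card_Icc]

lemma two_mul_sum_range_succ (m : ℕ) :
    2 * (∑ i ∈ Finset.range m, (i + 1)) = m * (m + 1) := by
  induction m with
  | zero => simp
  | succ n ih => rw [Finset.sum_range_succ, mul_add, ih]; ring

lemma sum_range_succ_tri (m : ℕ) :
    ∑ i ∈ Finset.range m, (i + 1) = m * (m + 1) / 2 := by
  rw [← two_mul_sum_range_succ m, Nat.mul_div_cancel_left _ (by norm_num)]

lemma maxIntervals_empty : maxIntervals ∅ = ∅ := by
  apply Finset.eq_empty_of_forall_notMem
  intro I hI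
  rw [maxIntervals, Finset.mem_filter] at hI
  obtain ⟨a, b, hab, hIab, hsub, -, -⟩ := hI.2
  have : a ∈ (∅ : Finset ℕ) := hsub (hIab ▸ Finset.mem_Icc.mpr ⟨le_rfl, hab⟩)
  exact absurd this (Finset.notMem_empty a)

lemma nstat_eq_sum_runlen (K : Finset ℕ) : Nstat K = ∑ k ∈ K, runlen K k := by
  induction K using Finset.strongInduction with
  | _ K ih =>
  rcases K.eq_empty_or_nonempty with rfl | hne
  · simp [Nstat, maxIntervals_empty]
  set M := K.max' hne with hMdef
  have hMK : M ∈ K := K.max'_mem hne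
  have hex : ∃ a, Finset.Icc a M ⊆ K := ⟨M, by simpa [Finset.Icc_self] using hMK⟩
  set a := Nat.find hex with hadef
  have hasub : Finset.Icc a M ⊆ K := Nat.find_spec hex
  have haM : a ≤ M := Nat.find_min' hex (by simpa [Finset.Icc_self] using hMK)
  have hprev : ∀ c, c + 1 = a → c ∉ K := by
    intro c hc hcK
    have h2 : ¬ (Finset.Icc c M ⊆ K) := Nat.find_min hex (by omega)
    apply h2
    intro x hx
    obtain ⟨hcx, hxM⟩ := Finset.mem_Icc.mp hx
    rcases eq_or_lt_of_le hcx with h | h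
    · exact h ▸ hcK
    · exact hasub (Finset.mem_Icc.mpr ⟨by omega, hxM⟩)
  set I := Finset.Icc a M with hIdef
  have hIK : I ⊆ K := hasub
  have hInonempty : I.Nonempty := ⟨a, Finset.mem_Icc.mpr ⟨le_rfl, haM⟩⟩
  set K' := K \ I with hK'def
  have hK'lt : ∀ x ∈ K', x < a := by
    intro x hx
    obtain ⟨hxK, hxI⟩ := Finset.mem_sdiff.mp hx
    by_contra h
    push_neg at h
    exact hxI (Finset.mem_Icc.mpr ⟨h, K.le_max' x hxK⟩)
  have hMax : IsMaxInterval K I :=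
    ⟨a, M, haM, rfl, hIK, hprev, fun h => absurd (K.le_max' _ h) (by omega)⟩
  have hsplit : maxIntervals K = insert I (maxIntervals K') := by
    ext J
    simp only [maxIntervals, Finset.mem_filter, Finset.mem_powerset, Finset.mem_insert,
      IsMaxInterval]
    constructor
    · rintro ⟨hJK, a', b', hab', rfl, hsubJ, hleft, hright⟩
      by_cases hb : b' < a
      · right
        have hsubK' : Finset.Icc a' b' ⊆ K' := by
          intro x hx
          obtain ⟨_, hxb⟩ := Finset.mem_Icc.mp hx
          refine Finset.mem_sdiff.mpr ⟨hsubJ hx, fun hxI => ?_⟩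
          have := (Finset.mem_Icc.mp hxI).1
          omega
        exact ⟨hsubK', a', b', hab', rfl, hsubK',
          fun c hc h => hleft c hc (Finset.mem_sdiff.mp h).1,
          fun h => hright (Finset.mem_sdiff.mp h).1⟩
      · left
        push_neg at hb
        have hb'K : b' ∈ K := hsubJ (Finset.mem_Icc.mpr ⟨hab', le_rfl⟩)
        have hb'M : b' ≤ M := K.le_max' _ hb'K
        have hbM : b' = M := by
          by_contra h
          exact hright (hasub (Finset.mem_Icc.mpr ⟨by omega, by omega⟩))
        have haa : a' = a := by
          rcases lt_trichotomy a' a with h | h | h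
          · exact absurd (hbM ▸ hsubJ) (Nat.find_min hex h)
          · exact h
          · exact absurd (hasub (Finset.mem_Icc.mpr ⟨by omega, by omega⟩))
              (hleft (a' - 1) (by omega))
        rw [haa, hbM]
    · rintro (rfl | ⟨hJK', a', b', hab', rfl, hsubJ, hleft, hright⟩)
      · exact ⟨hIK, a, M, haM, rfl, hIK, hprev, fun h => absurd (K.le_max' _ h) (by omega)⟩
      · have hsubK : Finset.Icc a' b' ⊆ K := fun x hx => (Finset.mem_sdiff.mp (hsubJ hx)).1
        have hb'a : b' < a := hK'lt b' (hsubJ (Finset.mem_Icc.mpr ⟨hab', le_rfl⟩))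
        refine ⟨hsubK, a', b', hab', rfl, hsubK, ?_, ?_⟩
        · intro c hc hcK
          have hcI : c ∈ I := by
            by_contra h
            exact hleft c hc (Finset.mem_sdiff.mpr ⟨hcK, h⟩)
          have := (Finset.mem_Icc.mp hcI).1
          omega
        · intro h
          have hbI : b' + 1 ∈ I := by
            by_contra hh
            exact hright (Finset.mem_sdiff.mpr ⟨h, hh⟩)
          have hab : a ≤ b' + 1 := (Finset.mem_Icc.mp hbI).1
          exact hprev b' (by omega) (hsubK (Finset.mem_Icc.mpr ⟨hab', le_rfl⟩))
  have hInotin : I ∉ maxIntervals K' := by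
    intro h
    have hsub' : I ⊆ K' := Finset.mem_powerset.mp
      ((Finset.mem_filter.mp (by rwa [maxIntervals] at h)).1)
    have hMI : M ∈ I := Finset.mem_Icc.mpr ⟨haM, le_rfl⟩
    have := hK'lt M (hsub' hMI)
    omega
  have hN : Nstat K = I.card * (I.card + 1) / 2 + Nstat K' := by
    rw [Nstat, hsplit, Finset.sum_insert hInotin]; rfl
  have hK'ss : K' ⊂ K := Finset.sdiff_ssubset hIK hInonempty
  have h1 : ∀ k ∈ K', runlen K k = runlen K' k := by
    intro k hk
    have hka := hK'lt k hk
    refine (runlen_subset_eq Finset.sdiff_subset (fun x hx hxk => ?_)).symm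
    refine Finset.mem_sdiff.mpr ⟨hx, fun hxI => ?_⟩
    have := (Finset.mem_Icc.mp hxI).1
    omega
  have h2 : ∑ k ∈ I, runlen K k = I.card * (I.card + 1) / 2 := by
    have hc : ∀ k ∈ I, runlen K k = k + 1 - a := fun k hk => runlen_top haM hasub hprev hk
    rw [Finset.sum_congr rfl hc, hIdef, ← Finset.Ico_add_one_right_eq_Icc, Finset.sum_Ico_eq_sum_range]
    have hc2 : ∀ i ∈ Finset.range (M + 1 - a), a + i + 1 - a = i + 1 := fun i _ => by omega
    rw [Finset.sum_congr rfl hc2, sum_range_succ_tri, Nat.card_Ico]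
  calc Nstat K = I.card * (I.card + 1) / 2 + Nstat K' := hN
    _ = (∑ k ∈ I, runlen K k) + ∑ k ∈ K', runlen K' k := by rw [h2, ih K' hK'ss]
    _ = (∑ k ∈ I, runlen K k) + ∑ k ∈ K', runlen K k := by
        rw [Finset.sum_congr rfl h1]
    _ = ∑ k ∈ K, runlen K k := by
        rw [add_comm]; exact Finset.sum_sdiff hIK

lemma nstat_empty : Nstat ∅ = 0 := by simp [Nstat, maxIntervals_empty]

lemma mueps_empty (ε : ℤ) : mueps ε ∅ = 0 := by simp [mueps, nstat_empty]

lemma mueps_erase_max (ε : ℤ) (K : Finset ℕ) (hne : K.Nonempty) :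
    mueps ε K = mueps ε (K.erase (K.max' hne)) +
      (K.max' hne : ℚ) * ((K.max' hne : ℚ) - (ε : ℚ)) / 2
      + (runlen K (K.max' hne) : ℚ) := by
  set M := K.max' hne with hMdef
  have hMK : M ∈ K := K.max'_mem hne
  have hNs : Nstat K = Nstat (K.erase M) + runlen K M := by
    rw [nstat_eq_sum_runlen, nstat_eq_sum_runlen, ← Finset.add_sum_erase K _ hMK]
    have hcongr : ∀ k ∈ K.erase M, runlen K k = runlen (K.erase M) k := by
      intro k hk
      have hkM : k < M := lt_of_le_of_ne (K.le_max' k (Finset.mem_of_mem_erase hk))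
        (Finset.ne_of_mem_erase hk)
      exact (runlen_subset_eq (Finset.erase_subset _ _)
        (fun x hx hxk => Finset.mem_erase.mpr ⟨by omega, hx⟩)).symm
    rw [Finset.sum_congr rfl hcongr]
    exact add_comm _ _
  have hSum : (∑ k ∈ K, (k : ℚ) * ((k : ℚ) - (ε : ℚ)) / 2)
      = (∑ k ∈ K.erase M, (k : ℚ) * ((k : ℚ) - (ε : ℚ)) / 2)
        + (M : ℚ) * ((M : ℚ) - (ε : ℚ)) / 2 := by
    rw [← Finset.add_sum_erase K _ hMK]; ring
  rw [mueps, mueps, hSum, hNs]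
  push_cast
  ring

lemma max'_Icc_one (d : ℕ) (h : (Finset.Icc 1 (d + 1)).Nonempty) :
    (Finset.Icc 1 (d + 1)).max' h = d + 1 := by
  apply le_antisymm
  · exact Finset.max'_le _ _ _ (fun y hy => (Finset.mem_Icc.mp hy).2)
  · exact Finset.le_max' _ _ (Finset.mem_Icc.mpr ⟨by omega, le_rfl⟩)

lemma runlen_Icc_one (d : ℕ) : runlen (Finset.Icc 1 (d + 1)) (d + 1) = d + 1 := by
  have h := runlen_top (K := Finset.Icc 1 (d + 1)) (a := 1) (M := d + 1) (by omega)
    (le_refl _) (fun c hc hm => by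
      have := (Finset.mem_Icc.mp hm).1; omega)
    (Finset.mem_Icc.mpr ⟨by omega, le_rfl⟩)
  omega

lemma mueps_Icc_succ (ε : ℤ) (d : ℕ) :
    mueps ε (Finset.Icc 1 (d + 1)) = mueps ε (Finset.Icc 1 d)
      + ((d : ℚ) + 1) * ((d : ℚ) + 1 - (ε : ℚ)) / 2 + ((d : ℚ) + 1) := by
  have hne : (Finset.Icc 1 (d + 1)).Nonempty := ⟨d + 1, Finset.mem_Icc.mpr ⟨by omega, le_rfl⟩⟩
  have h := mueps_erase_max ε (Finset.Icc 1 (d + 1)) hne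
  rw [max'_Icc_one d hne] at h
  have herase : (Finset.Icc 1 (d + 1)).erase (d + 1) = Finset.Icc 1 d := by
    ext x
    simp only [Finset.mem_erase, Finset.mem_Icc]
    omega
  rw [herase, runlen_Icc_one] at h
  rw [h]
  push_cast
  ring

lemma mueps_Icc_formula (ε : ℤ) (d : ℕ) :
    mueps ε (Finset.Icc 1 d)
      = (1 / 6 : ℚ) * (d : ℚ) * ((d : ℚ) + 1) * ((d : ℚ) + (7 - 3 * (ε : ℚ)) / 2) := by
  induction d with
  | zero =>
      rw [Finset.Icc_eq_empty (by omega), mueps_empty]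
      norm_num
  | succ n ih =>
      rw [mueps_Icc_succ, ih]
      push_cast
      ring

lemma mueps_key (ε : ℤ) (hε : ε = 1 ∨ ε = -1) :
    ∀ (d : ℕ) (K : Finset ℕ), (∀ k ∈ K, 1 ≤ k) → K.card = d →
      mueps ε (Finset.Icc 1 d) ≤ mueps ε K ∧
        (mueps ε K = mueps ε (Finset.Icc 1 d) → K = Finset.Icc 1 d) := by
  intro d
  induction d with
  | zero =>
      intro K _ hcard
      have hK : K = ∅ := Finset.card_eq_zero.mp hcard
      have hI : Finset.Icc 1 0 = (∅ : Finset ℕ) := Finset.Icc_eq_empty (by omega)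
      rw [hK, hI]
      exact ⟨le_rfl, fun _ => rfl⟩
  | succ d ih =>
      intro K h1 hcard
      have hne : K.Nonempty := Finset.card_pos.mp (by omega)
      set M := K.max' hne with hMdef
      have hMK : M ∈ K := K.max'_mem hne
      have hsub : K ⊆ Finset.Icc 1 M := fun x hx =>
        Finset.mem_Icc.mpr ⟨h1 x hx, K.le_max' x hx⟩
      have hM : d + 1 ≤ M := by
        have := Finset.card_le_card hsub
        rw [hcard, Nat.card_Icc] at this
        omega
      rcases eq_or_lt_of_le hM with hMe | hMl
      · have hKeq : K = Finset.Icc 1 (d + 1) := by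
          apply Finset.eq_of_subset_of_card_le (hMe ▸ hsub)
          rw [hcard, Nat.card_Icc]
          omega
        rw [hKeq]
        exact ⟨le_rfl, fun _ => rfl⟩
      · have hcard' : (K.erase M).card = d := by
          rw [Finset.card_erase_of_mem hMK, hcard]
          omega
        have hIH := ih (K.erase M) (fun k hk => h1 k (Finset.mem_of_mem_erase hk)) hcard'
        have hrec := mueps_erase_max ε K hne
        have hrecI := mueps_Icc_succ ε d
        have hr : (1 : ℚ) ≤ (runlen K M : ℚ) := by
          exact_mod_cast runlen_pos hMK
        have hMq : (d : ℚ) + 2 ≤ (M : ℚ) := by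
          have : d + 2 ≤ M := hMl
          exact_mod_cast this
        have hεq : (ε : ℚ) ≤ 1 := by
          rcases hε with rfl | rfl <;> norm_num
        have hstrict : mueps ε (Finset.Icc 1 (d + 1)) + 1 ≤ mueps ε K := by
          rw [hrec, hrecI]
          have hle := hIH.1
          have hA : (1 : ℚ) ≤ (M : ℚ) - (d : ℚ) - 1 := by linarith
          have hB : 2 * (d : ℚ) + 2 ≤ (M : ℚ) + (d : ℚ) + 1 - (ε : ℚ) := by linarith
          have hprod : 1 * (2 * (d : ℚ) + 2)
              ≤ ((M : ℚ) - (d : ℚ) - 1) * ((M : ℚ) + (d : ℚ) + 1 - (ε : ℚ)) :=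
            mul_le_mul hA hB (by linarith) (by linarith)
          nlinarith [hprod, hle, hr]
        refine ⟨by linarith, fun h => absurd h (by linarith)⟩

/-- The minimum of `μ^{(ε)}(K)` over subsets `K ⊆ [1,ℓ−1]` of cardinality `d` is attained
only at `K = [1,d]`, and equals `(1/6)·d(d+1)(d + (7−3ε)/2)`. -/
theorem mueps_min (ℓ d : ℕ) (ε : ℤ) (hε : ε = 1 ∨ ε = -1)
    (hd1 : 1 ≤ d) (hd2 : d ≤ ℓ - 1) :
    (∀ K : Finset ℕ, K ⊆ Finset.Icc 1 (ℓ - 1) → K.card = d →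
        mueps ε (Finset.Icc 1 d) ≤ mueps ε K ∧
          (mueps ε K = mueps ε (Finset.Icc 1 d) → K = Finset.Icc 1 d)) ∧
    mueps ε (Finset.Icc 1 d)
      = (1 / 6 : ℚ) * (d : ℚ) * ((d : ℚ) + 1) * ((d : ℚ) + (7 - 3 * (ε : ℚ)) / 2) := by
  constructor
  · intro K hK hcard
    exact mueps_key ε hε d K (fun k hk => (Finset.mem_Icc.mp (hK hk)).1) hcard
  · exact mueps_Icc_formula ε d
end

section
/- The polynomial P_ℓ^{(ε)}(q,T) := ∑_{K ⊆ [1,ℓ−1]} w_{ℓ,K}(q) q^{−a_ℓ^{(ε)}(K)} T^{#K} satisfies the functional equation P_ℓ^{(ε)}(q^{−1}, T^{−1}) = T^{1−ℓ} q^{(1/3)ℓ(ℓ−1)(ℓ+(1−3ε)/4) − ℓ(ℓ−1)/2} · P_ℓ^{(ε)}(q,T). -/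
open scoped Classical

/-- The descent set of a permutation of `{1,…,ℓ}` (positions encoded by `Fin ℓ`). -/
noncomputable def descents (ℓ : ℕ) (π : Equiv.Perm (Fin ℓ)) : Finset ℕ :=
  (Finset.Icc 1 (ℓ - 1)).filter fun i =>
    ∃ (h1 : i - 1 < ℓ) (h2 : i < ℓ), π ⟨i, h2⟩ < π ⟨i - 1, h1⟩

/-- The number of inversions of `π`. -/
noncomputable def invCount (ℓ : ℕ) (π : Equiv.Perm (Fin ℓ)) : ℕ :=
  (Finset.univ.filter fun p : Fin ℓ × Fin ℓ => p.1 < p.2 ∧ π p.2 < π p.1).card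

/-- The descent polynomial `w_{ℓ,K}(q) = ∑_{π ∈ S_ℓ, D(π)=K} q^{inv(π)}`. -/
noncomputable def descPoly (ℓ : ℕ) (K : Finset ℕ) (q : ℚ) : ℚ :=
  ∑ π ∈ Finset.univ.filter fun π : Equiv.Perm (Fin ℓ) => descents ℓ π = K,
    q ^ invCount ℓ π

/-- `a_ℓ^{(ε)}(K) := ∑_{i ∈ K} ( ℓ(ℓ−ε)/2 − i(i−ε)/2 )`, as an integer. -/
def aInt (ℓ : ℕ) (ε : ℤ) (K : Finset ℕ) : ℤ :=
  ∑ i ∈ K, ((ℓ : ℤ) * ((ℓ : ℤ) - ε) / 2 - (i : ℤ) * ((i : ℤ) - ε) / 2)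

/-- `P_ℓ^{(ε)}(q,T) := ∑_{K ⊆ [1,ℓ−1]} w_{ℓ,K}(q) q^{−a_ℓ^{(ε)}(K)} T^{#K}`. -/
noncomputable def Ppoly (ℓ : ℕ) (ε : ℤ) (q T : ℚ) : ℚ :=
  ∑ K ∈ (Finset.Icc 1 (ℓ - 1)).powerset,
    descPoly ℓ K q * q ^ (-(aInt ℓ ε K)) * T ^ K.card

/-!
Left multiplication by the longest permutation `w₀ = Fin.revPerm` complements the descent set in
`S = [1, ℓ-1]` and sends `inv π` to `C(ℓ,2) - inv π`, so `w_{ℓ,S∖K}(q⁻¹) = q^{-C(ℓ,2)} w_{ℓ,K}(q)`.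
Reindexing `P_ℓ^{(ε)}(q⁻¹, T⁻¹)` by `K ↦ S ∖ K` and using additivity of `a_ℓ^{(ε)}` turns every
term into the corresponding term of `P_ℓ^{(ε)}(q, T)`, times `T^{1-ℓ} q^{a_ℓ^{(ε)}(S) - C(ℓ,2)}`;
summing squares gives `a_ℓ^{(ε)}(S) = ℓ(ℓ-1)(4ℓ+1-3ε)/12`, which is the stated exponent plus `C(ℓ,2)`.
-/

open Finset

theorem card_filter_fst_lt_snd (n : ℕ) : #{p : Fin n × Fin n | p.1 < p.2} = n.choose 2 := by
  calc #{p : Fin n × Fin n | p.1 < p.2} = ∑ j : Fin n, (j : ℕ) := by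
        rw [card_filter, Fintype.sum_prod_type_right]
        simp [filter_gt_eq_Iio]
    _ = n.choose 2 := by
        rw [Fin.sum_univ_eq_sum_range (fun i => i), sum_range_id, Nat.choose_two_right]

theorem invCount_revPerm_mul_add_invCount (ℓ : ℕ) (π : Equiv.Perm (Fin ℓ)) :
    invCount ℓ (Fin.revPerm * π) + invCount ℓ π = ℓ.choose 2 := by
  rw [← card_filter_fst_lt_snd, ← card_filter_add_card_filter_not (fun p => π p.1 < π p.2),
    invCount, invCount, filter_filter, filter_filter]
  congr 2 <;> ext p
  · simp
  · simp only [mem_filter, mem_univ, true_and, not_lt, and_congr_right_iff]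
    exact fun h => ⟨le_of_lt, fun h' => h'.lt_of_ne (π.injective.ne h.ne')⟩

theorem descents_subset (ℓ : ℕ) (π : Equiv.Perm (Fin ℓ)) : descents ℓ π ⊆ Icc 1 (ℓ - 1) :=
  filter_subset _ _

theorem descents_revPerm_mul (ℓ : ℕ) (π : Equiv.Perm (Fin ℓ)) :
    descents ℓ (Fin.revPerm * π) = Icc 1 (ℓ - 1) \ descents ℓ π := by
  rw [descents, descents, ← filter_not]
  refine filter_congr fun i hi => ?_
  rw [mem_Icc] at hi
  have hi' : i - 1 < ℓ ∧ i < ℓ := by omega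
  have hne : π ⟨i, hi'.2⟩ ≠ π ⟨i - 1, hi'.1⟩ :=
    π.injective.ne (by simp only [ne_eq, Fin.mk.injEq]; omega)
  simp only [Equiv.Perm.mul_apply, Fin.revPerm_apply, Fin.rev_lt_rev, hi', exists_true_left,
    not_lt]
  exact ⟨le_of_lt, fun h => h.lt_of_ne hne.symm⟩

theorem descPoly_sdiff_inv (ℓ : ℕ) {q : ℚ} (hq : q ≠ 0) {K : Finset ℕ}
    (hK : K ⊆ Icc 1 (ℓ - 1)) :
    descPoly ℓ (Icc 1 (ℓ - 1) \ K) q⁻¹ = (q ^ ℓ.choose 2)⁻¹ * descPoly ℓ K q := by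
  rw [descPoly, descPoly, mul_sum]
  refine sum_equiv (Equiv.mulLeft Fin.revPerm) (fun π => ?_) (fun π _ => ?_)
  · simp only [mem_filter, mem_univ, true_and, Equiv.coe_mulLeft, descents_revPerm_mul]
    constructor
    · intro h; rw [h, Finset.sdiff_sdiff_eq_self hK]
    · intro h; rw [← h, Finset.sdiff_sdiff_eq_self (descents_subset ℓ π)]
  · rw [Equiv.coe_mulLeft, ← invCount_revPerm_mul_add_invCount ℓ π, pow_add, mul_inv,
      mul_comm (_)⁻¹, mul_assoc, inv_mul_cancel₀ (pow_ne_zero _ hq), mul_one, inv_pow]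

theorem sum_powerset_sdiff {α β : Type*} [DecidableEq α] [AddCommMonoid β] (s : Finset α)
    (f : Finset α → β) : ∑ t ∈ s.powerset, f (s \ t) = ∑ t ∈ s.powerset, f t :=
  sum_nbij' (s \ ·) (s \ ·) (by simp) (by simp)
    (fun _ ht => Finset.sdiff_sdiff_eq_self (mem_powerset.1 ht))
    (fun _ ht => Finset.sdiff_sdiff_eq_self (mem_powerset.1 ht)) (fun _ _ => rfl)

theorem two_dvd_mul_sub {ε : ℤ} (hε : ε = 1 ∨ ε = -1) (n : ℤ) : 2 ∣ n * (n - ε) := by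
  rcases hε with rfl | rfl
  · exact (Int.even_mul_pred_self n).two_dvd
  · simpa using (Int.even_mul_succ_self n).two_dvd

theorem sum_Icc_mul_sub (c : ℚ) (n : ℕ) :
    ∑ i ∈ Icc 1 n, (i : ℚ) * (i - c) = n * (n + 1) * (2 * n + 1) / 6 - c * n * (n + 1) / 2 := by
  induction n with
  | zero => simp
  | succ n ih =>
    rw [sum_Icc_succ_top (by omega), ih]
    push_cast; ring

theorem cast_aInt {ε : ℤ} (hε : ε = 1 ∨ ε = -1) (ℓ : ℕ) (K : Finset ℕ) :
    (aInt ℓ ε K : ℚ) = ∑ i ∈ K, ((ℓ : ℚ) * (ℓ - ε) - i * (i - ε)) / 2 := by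
  rw [aInt, Int.cast_sum]
  refine sum_congr rfl fun i _ => ?_
  rw [Int.cast_sub, Int.cast_div (two_dvd_mul_sub hε _) two_ne_zero,
    Int.cast_div (two_dvd_mul_sub hε _) two_ne_zero]
  push_cast; ring

theorem cast_aInt_Icc {ε : ℤ} (hε : ε = 1 ∨ ε = -1) (ℓ : ℕ) :
    (aInt ℓ ε (Icc 1 (ℓ - 1)) : ℚ) = ℓ * (ℓ - 1) * (4 * ℓ + 1 - 3 * ε) / 12 := by
  rw [cast_aInt hε, ← sum_div, sum_sub_distrib, sum_const, sum_Icc_mul_sub, Nat.card_Icc,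
    nsmul_eq_mul]
  rcases ℓ with _ | n
  · simp
  · simp only [Nat.add_sub_cancel]
    push_cast; ring

/-- Functional equation
`P_ℓ^{(ε)}(q⁻¹, T⁻¹) = T^{1−ℓ} q^{(1/3)ℓ(ℓ−1)(ℓ+(1−3ε)/4) − ℓ(ℓ−1)/2} · P_ℓ^{(ε)}(q,T)`. -/
theorem Ppoly_functional_equation (ℓ : ℕ) (hℓ : 2 ≤ ℓ) (ε : ℤ) (hε : ε = 1 ∨ ε = -1)
    (q T : ℚ) (hq : q ≠ 0) (hT : T ≠ 0) (e : ℤ)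
    (he : (e : ℚ) = (1 / 3 : ℚ) * (ℓ : ℚ) * ((ℓ : ℚ) - 1) * ((ℓ : ℚ) + (1 - 3 * (ε : ℚ)) / 4)
        - (ℓ : ℚ) * ((ℓ : ℚ) - 1) / 2) :
    Ppoly ℓ ε q⁻¹ T⁻¹ = T ^ (1 - (ℓ : ℤ)) * q ^ e * Ppoly ℓ ε q T := by
  set S := Icc 1 (ℓ - 1)
  have haS : aInt ℓ ε S = e + ℓ.choose 2 := by
    have : (aInt ℓ ε S : ℚ) = e + ℓ.choose 2 := by
      rw [cast_aInt_Icc hε, he, Nat.cast_choose_two]; ring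
    exact_mod_cast this
  rw [Ppoly, Ppoly, ← sum_powerset_sdiff, mul_sum]
  refine sum_congr rfl fun K hK => ?_
  rw [mem_powerset] at hK
  have ha : aInt ℓ ε (S \ K) + aInt ℓ ε K = aInt ℓ ε S := sum_sdiff hK
  have hcard : (#(S \ K) : ℤ) = ℓ - 1 - #K := by
    have hK' := card_le_card hK
    rw [Nat.card_Icc] at hK'
    rw [card_sdiff_of_subset hK, Nat.card_Icc]
    omega
  have hqpow : (q ^ ℓ.choose 2)⁻¹ * q⁻¹ ^ (-aInt ℓ ε (S \ K)) = q ^ e * q ^ (-aInt ℓ ε K) := by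
    rw [← zpow_natCast, ← zpow_neg, inv_zpow', neg_neg, ← zpow_add₀ hq, ← zpow_add₀ hq]
    congr 1; omega
  have hTpow : T⁻¹ ^ #(S \ K) = T ^ (1 - (ℓ : ℤ)) * T ^ #K := by
    rw [← zpow_natCast, inv_zpow', hcard, ← zpow_natCast, ← zpow_add₀ hT]
    congr 1; ring
  rw [descPoly_sdiff_inv ℓ hq hK]
  linear_combination (descPoly ℓ K q * T⁻¹ ^ #(S \ K)) * hqpow
    + (q ^ e * descPoly ℓ K q * q ^ (-aInt ℓ ε K)) * hTpow
end

section
/- For ε ∈ {±1} and d ∈ [1,ℓ−1], among permutations π ∈ S_ℓ with #D(π) = d, the maximum of −(ℓ(ℓ−ε)/2)d + ∑_{ν∈D(π)} ν(ν−ε)/2 + inv(π) equals d·(−ℓ(d−1)/2 + (1/6)(d+1)(d − (5−3ε)/2)), and it is attained by exactly one permutation. -/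
/-!
Since `ε` is odd, `ν(ν-ε)` is even and `2·expInt` involves no rounding. Writing
`ℓ(ℓ-ε) - ν(ν-ε) = ∑_{ν ≤ k < ℓ} (2k+1-ε)` and `inv(π) = ∑_k c_k`, where `c_k ≤ k` counts the
`j < k` with `π j > π k`, gives `2·expInt π = ∑_k (2c_k - m_k(2k+1-ε))`, with `m_k` the number
of descents `≤ k`. Each summand is bounded on its own: `m_k ≥ d - (ℓ-1-k)` when there are `d`
descents, and `m_k = 0` forces `c_k = 0` because `π` then increases up to `k`. All bounds are
attained by the permutation `d, d+1, …, ℓ-1, d-1, …, 1, 0`, and equality at the positions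
`k ≥ ℓ-d` forces `c_k = k` there; this pins the descent set to `[ℓ-d, ℓ)`, hence `π` is
increasing before `ℓ-d` and takes a new minimum at every later position, which determines it.
-/

open scoped Classical

/-- The exponent `−(ℓ(ℓ−ε)/2)·#D(π) + ∑_{ν ∈ D(π)} ν(ν−ε)/2 + inv(π)` attached to `π`. -/
noncomputable def expInt (ℓ : ℕ) (ε : ℤ) (π : Equiv.Perm (Fin ℓ)) : ℤ :=
  -((ℓ : ℤ) * ((ℓ : ℤ) - ε) / 2) * ((descents ℓ π).card : ℤ)
    + ∑ ν ∈ descents ℓ π, (ν : ℤ) * ((ν : ℤ) - ε) / 2 + (invCount ℓ π : ℤ)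

open Finset

lemma Equiv.Perm.eq_of_lt_iff_lt {α : Type*} [LinearOrder α] [Finite α]
    {σ τ : Equiv.Perm α} (h : ∀ i j, σ i < σ j ↔ τ i < τ j) : σ = τ := by
  have hmono : StrictMono (σ ∘ τ.symm) := fun x y hxy => by
    simpa [h] using hxy
  ext i
  simpa using congrFun hmono.eq_id (τ i)

lemma Int.two_dvd_mul_sub_of_odd {ε : ℤ} (hε : Odd ε) (n : ℤ) : 2 ∣ n * (n - ε) := by
  rw [← even_iff_two_dvd]
  rcases Int.even_or_odd n with h | h
  · exact h.mul_right _
  · exact (h.sub_odd hε).mul_left _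

lemma Finset.sum_range_two_mul_add_one_sub (ε : ℤ) (n : ℕ) :
    ∑ k ∈ range n, (2 * (k : ℤ) + 1 - ε) = n * (n - ε) := by
  induction n with
  | zero => simp
  | succ n ih => rw [sum_range_succ, ih]; push_cast; ring

lemma Finset.sum_sum_Ico_eq_sum_card_smul {M : Type*} [AddCommMonoid M] (D : Finset ℕ) (n : ℕ)
    (f : ℕ → M) : ∑ ν ∈ D, ∑ k ∈ Ico ν n, f k = ∑ k ∈ range n, #{ν ∈ D | ν ≤ k} • f k := by
  rw [sum_comm' (t' := range n) (s' := fun k => {ν ∈ D | ν ≤ k})]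
  · simp only [sum_const]
  · intro ν k
    simp only [mem_Ico, mem_range, mem_filter]
    tauto

namespace ASH

variable {ℓ : ℕ}

noncomputable def invCode (π : Equiv.Perm (Fin ℓ)) (i : Fin ℓ) : ℕ :=
  #{j ∈ Iio i | π i < π j}

lemma invCount_eq_sum_invCode (π : Equiv.Perm (Fin ℓ)) :
    invCount ℓ π = ∑ i, invCode π i := by
  rw [invCount, card_eq_sum_card_fiberwise (f := Prod.snd) (t := univ) fun _ _ => mem_univ _]
  refine sum_congr rfl fun i _ => card_nbij' Prod.fst (fun j => (j, i)) ?_ ?_ ?_ ?_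
  · rintro ⟨j, i⟩ h
    simp only [coe_filter, mem_filter, mem_univ, true_and] at h
    obtain ⟨h, rfl⟩ := h
    simpa using h
  · intro j h
    simpa using h
  · rintro ⟨j, i⟩ h
    simp only [coe_filter, mem_filter, mem_univ, true_and] at h
    obtain ⟨-, rfl⟩ := h
    rfl
  · exact fun _ _ => rfl

lemma invCode_le (π : Equiv.Perm (Fin ℓ)) (i : Fin ℓ) : invCode π i ≤ i :=
  (card_filter_le _ _).trans_eq (Fin.card_Iio i)

lemma invCode_eq_zero_iff {π : Equiv.Perm (Fin ℓ)} {i : Fin ℓ} :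
    invCode π i = 0 ↔ ∀ j < i, π j < π i := by
  simp only [invCode, card_filter_eq_zero_iff, mem_Iio, not_lt]
  exact forall₂_congr fun j hj => (le_iff_lt_or_eq.trans <| or_iff_left <|
    π.injective.ne hj.ne)

lemma invCode_eq_self_iff {π : Equiv.Perm (Fin ℓ)} {i : Fin ℓ} :
    invCode π i = i ↔ ∀ j < i, π i < π j := by
  simp only [invCode, ← Fin.card_Iio i, card_filter_eq_iff, mem_Iio]

lemma descents_subset (π : Equiv.Perm (Fin ℓ)) : descents ℓ π ⊆ Icc 1 (ℓ - 1) :=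
  filter_subset _ _

lemma succ_mem_descents_iff (π : Equiv.Perm (Fin ℓ)) {i : ℕ} (hi : i + 1 < ℓ) :
    i + 1 ∈ descents ℓ π ↔ π ⟨i + 1, hi⟩ < π ⟨i, by omega⟩ := by
  simp only [descents, mem_filter, mem_Icc, add_tsub_cancel_right]
  exact ⟨fun h => h.2.2.2, fun h => ⟨⟨by omega, by omega⟩, by omega, hi, h⟩⟩

lemma lt_of_forall_lt_descents (π : Equiv.Perm (Fin ℓ)) {i : Fin ℓ}
    (hD : ∀ ν ∈ descents ℓ π, (i : ℕ) < ν) {j : Fin ℓ} (hji : j < i) : π j < π i := by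
  obtain ⟨i, hi⟩ := i
  induction i with
  | zero => exact absurd (Fin.lt_def.1 hji) (Nat.not_lt_zero _)
  | succ n ih =>
    have hstep : π ⟨n, by omega⟩ < π ⟨n + 1, hi⟩ := by
      refine lt_of_le_of_ne (not_lt.1 fun h => ?_) (π.injective.ne (by simp))
      exact lt_irrefl _ (hD _ ((succ_mem_descents_iff π hi).2 h))
    rcases Nat.lt_succ_iff_lt_or_eq.1 (Fin.lt_def.1 hji) with hjn | hjn
    · exact (ih (by omega) (fun ν hν => Nat.lt_of_succ_lt (hD ν hν))
        (Fin.lt_def.2 hjn)).trans hstep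
    · rwa [show j = ⟨n, by omega⟩ from Fin.ext hjn]

lemma card_descents_le (π : Equiv.Perm (Fin ℓ)) (k : ℕ) :
    #(descents ℓ π) ≤ #{ν ∈ descents ℓ π | ν ≤ k} + (ℓ - 1 - k) := by
  have hgt : {ν ∈ descents ℓ π | ¬ν ≤ k} ⊆ Icc (k + 1) (ℓ - 1) := fun ν hν => by
    have := descents_subset π (mem_filter.1 hν).1
    simp only [mem_filter, mem_Icc] at hν this ⊢
    omega
  have := card_le_card hgt
  rw [Nat.card_Icc] at this
  have := card_filter_add_card_filter_not (s := descents ℓ π) (· ≤ k)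
  omega

noncomputable def expIntTerm (ε : ℤ) (π : Equiv.Perm (Fin ℓ)) (k : Fin ℓ) : ℤ :=
  2 * invCode π k - #{ν ∈ descents ℓ π | ν ≤ (k : ℕ)} * (2 * k + 1 - ε)

lemma two_mul_expInt {ε : ℤ} (hε : Odd ε) (π : Equiv.Perm (Fin ℓ)) :
    2 * expInt ℓ ε π = ∑ k, expIntTerm ε π k := by
  have hdiv (n : ℤ) : 2 * (n * (n - ε) / 2) = n * (n - ε) :=
    Int.mul_ediv_cancel' (Int.two_dvd_mul_sub_of_odd hε n)
  have hD : ∑ ν ∈ descents ℓ π, ((ℓ : ℤ) * (ℓ - ε) - ν * (ν - ε))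
      = ∑ k : Fin ℓ, #{ν ∈ descents ℓ π | ν ≤ (k : ℕ)} • (2 * (k : ℤ) + 1 - ε) := by
    rw [Fin.sum_univ_eq_sum_range fun k => #{ν ∈ descents ℓ π | ν ≤ k} • (2 * (k : ℤ) + 1 - ε),
      ← sum_sum_Ico_eq_sum_card_smul]
    refine sum_congr rfl fun ν hν => ?_
    have := mem_Icc.1 (descents_subset π hν)
    rw [sum_Ico_eq_sub _ (by omega), sum_range_two_mul_add_one_sub,
      sum_range_two_mul_add_one_sub]
  have hS : 2 * ∑ ν ∈ descents ℓ π, (ν : ℤ) * (ν - ε) / 2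
      = ∑ ν ∈ descents ℓ π, (ν : ℤ) * (ν - ε) := by
    rw [mul_sum]
    exact sum_congr rfl fun ν _ => hdiv ν
  simp only [nsmul_eq_mul] at hD
  simp only [expIntTerm, sum_sub_distrib, ← mul_sum, ← hD, expInt, invCount_eq_sum_invCode,
    Nat.cast_sum, sum_const, nsmul_eq_mul]
  linear_combination (-(#(descents ℓ π) : ℤ)) * hdiv ℓ + hS

def expIntTermBound (ℓ d : ℕ) (ε : ℤ) (k : ℕ) : ℤ :=
  if ℓ ≤ k + d then 2 * k - (k + d + 1 - ℓ) * (2 * k + 1 - ε) else 0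

lemma expIntTerm_le {ε : ℤ} (hε : ε ≤ 1) {π : Equiv.Perm (Fin ℓ)} {d : ℕ}
    (hπ : #(descents ℓ π) = d) (k : Fin ℓ) :
    expIntTerm ε π k ≤ expIntTermBound ℓ d ε k := by
  have hc := invCode_le π k
  have hm := hπ ▸ card_descents_le π k
  have hc0 : #{ν ∈ descents ℓ π | ν ≤ (k : ℕ)} = 0 → invCode π k = 0 := fun h =>
    invCode_eq_zero_iff.2 fun j => lt_of_forall_lt_descents π fun ν hν =>
      not_le.1 fun hνk => card_filter_eq_zero_iff.1 h ν hν hνk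
  have hk := k.2
  unfold expIntTerm expIntTermBound
  split_ifs with hkd
  · have : (k + d + 1 - ℓ : ℤ) ≤ #{ν ∈ descents ℓ π | ν ≤ (k : ℕ)} := by omega
    nlinarith
  · rcases Nat.eq_zero_or_pos #{ν ∈ descents ℓ π | ν ≤ (k : ℕ)} with h0 | hpos
    · simp [h0, hc0 h0]
    · have : (1 : ℤ) ≤ #{ν ∈ descents ℓ π | ν ≤ (k : ℕ)} := by exact_mod_cast hpos
      nlinarith

lemma invCode_eq_self_of_expIntTerm_eq {ε : ℤ} (hε : ε ≤ 1) {π : Equiv.Perm (Fin ℓ)}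
    {d : ℕ} (hπ : #(descents ℓ π) = d) {k : Fin ℓ} (hkd : ℓ ≤ k + d)
    (h : expIntTerm ε π k = expIntTermBound ℓ d ε k) : invCode π k = k := by
  have hc := invCode_le π k
  have hm := hπ ▸ card_descents_le π k
  have hk := k.2
  unfold expIntTerm expIntTermBound at h
  rw [if_pos hkd] at h
  have : (k + d + 1 - ℓ : ℤ) ≤ #{ν ∈ descents ℓ π | ν ≤ (k : ℕ)} := by omega
  have : ((invCode π k : ℕ) : ℤ) ≤ k := by exact_mod_cast hc
  zify
  nlinarith

def IncrThenMinima (a : ℕ) (π : Equiv.Perm (Fin ℓ)) : Prop :=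
  ∀ ⦃j i : Fin ℓ⦄, j < i → if a ≤ (i : ℕ) then π i < π j else π j < π i

namespace IncrThenMinima

variable {a : ℕ} {π : Equiv.Perm (Fin ℓ)}

lemma lt_iff (hπ : IncrThenMinima a π) (i j : Fin ℓ) :
    π i < π j ↔ (i < j ∧ ¬a ≤ (j : ℕ)) ∨ (j < i ∧ a ≤ (i : ℕ)) := by
  rcases lt_trichotomy i j with hij | rfl | hji
  · have := hπ hij
    split_ifs at this with ha <;> simp [hij, hij.not_gt, ha, this, this.not_gt]
  · simp
  · have := hπ hji
    split_ifs at this with ha <;> simp [hji, hji.not_gt, ha, this, this.not_gt]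

lemma eq {σ : Equiv.Perm (Fin ℓ)} (hπ : IncrThenMinima a π) (hσ : IncrThenMinima a σ) :
    π = σ :=
  Equiv.Perm.eq_of_lt_iff_lt fun i j => by rw [hπ.lt_iff, hσ.lt_iff]

lemma invCode_eq (hπ : IncrThenMinima a π) (i : Fin ℓ) :
    invCode π i = if a ≤ (i : ℕ) then (i : ℕ) else 0 := by
  split_ifs with ha
  · exact invCode_eq_self_iff.2 fun j hji => by simpa [ha] using hπ hji
  · exact invCode_eq_zero_iff.2 fun j hji => by simpa [ha] using hπ hji

lemma descents_eq (ha : 0 < a) (hπ : IncrThenMinima a π) : descents ℓ π = Ico a ℓ := by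
  ext ν
  rw [mem_Ico]
  by_cases hν : 0 < ν ∧ ν < ℓ
  · obtain ⟨n, rfl⟩ : ∃ n, ν = n + 1 := ⟨ν - 1, by omega⟩
    rw [succ_mem_descents_iff π hν.2, hπ.lt_iff]
    simp only [Fin.mk_lt_mk]
    omega
  · have : ν ∉ descents ℓ π := fun h =>
      hν (by have := mem_Icc.1 (descents_subset π h); omega)
    simp only [this, false_iff]
    omega

end IncrThenMinima

lemma incrThenMinima_of_expIntTerm_eq {ε : ℤ} (hε : ε ≤ 1) {π : Equiv.Perm (Fin ℓ)}
    {d : ℕ} (hd : d < ℓ) (hπ : #(descents ℓ π) = d)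
    (h : ∀ k, expIntTerm ε π k = expIntTermBound ℓ d ε k) : IncrThenMinima (ℓ - d) π := by
  have hmin : ∀ i : Fin ℓ, ℓ - d ≤ i → ∀ j < i, π i < π j := fun i hi =>
    invCode_eq_self_iff.1 (invCode_eq_self_of_expIntTerm_eq hε hπ (by omega) (h i))
  have hD : descents ℓ π = Ico (ℓ - d) ℓ := by
    refine (eq_of_subset_of_card_le (fun ν hν => ?_) (by rw [Nat.card_Ico, hπ]; omega)).symm
    obtain ⟨hν₁, hν₂⟩ := mem_Ico.1 hν
    obtain ⟨n, rfl⟩ : ∃ n, ν = n + 1 := ⟨ν - 1, by omega⟩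
    exact (succ_mem_descents_iff π hν₂).2 (hmin _ hν₁ _ (Fin.lt_def.2 (Nat.lt_succ_self n)))
  intro j i hji
  split_ifs with hi
  · exact hmin i hi j hji
  · exact lt_of_forall_lt_descents π (fun ν hν => by rw [hD, mem_Ico] at hν; omega) hji

def extremalPerm (ℓ d : ℕ) : Equiv.Perm (Fin ℓ) where
  toFun k := ⟨if (k : ℕ) < ℓ - d then d + k else ℓ - 1 - k, by split <;> omega⟩
  invFun v := ⟨if (v : ℕ) < d then ℓ - 1 - v else v - d, by split <;> omega⟩
  left_inv k := by ext; dsimp only; split_ifs <;> omega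
  right_inv v := by ext; dsimp only; split_ifs <;> omega

lemma incrThenMinima_extremalPerm (ℓ d : ℕ) : IncrThenMinima (ℓ - d) (extremalPerm ℓ d) := by
  intro j i hji
  have := Fin.lt_def.1 hji
  split_ifs <;> simp only [extremalPerm, Equiv.coe_fn_mk, Fin.lt_def] <;> split_ifs <;> omega

lemma IncrThenMinima.expIntTerm_eq {ε : ℤ} {d : ℕ} {π : Equiv.Perm (Fin ℓ)} (hd : d < ℓ)
    (hπ : IncrThenMinima (ℓ - d) π) (k : Fin ℓ) :
    expIntTerm ε π k = expIntTermBound ℓ d ε k := by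
  have hcount : {ν ∈ Ico (ℓ - d) ℓ | ν ≤ (k : ℕ)} = Icc (ℓ - d) k := by
    ext ν
    simp only [mem_filter, mem_Ico, mem_Icc]
    omega
  unfold expIntTerm expIntTermBound
  rw [hπ.invCode_eq, hπ.descents_eq (by omega), hcount, Nat.card_Icc]
  split_ifs with h₁ h₂ h₂
  · rw [show ((k + 1 - (ℓ - d) : ℕ) : ℤ) = k + d + 1 - ℓ by omega]
  · omega
  · omega
  · rw [Nat.sub_eq_zero_of_le (by omega)]
    simp

lemma sum_range_expIntTermBound (a ε : ℚ) (d : ℕ) :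
    ∑ t ∈ range d, (2 * (a + t) - (t + 1) * (2 * (a + t) + 1 - ε))
      = 2 * (d * (-(a + d) * (d - 1) / 2 + (1 / 6) * (d + 1) * (d - (5 - 3 * ε) / 2))) := by
  induction d with
  | zero => simp
  | succ d ih => rw [sum_range_succ, ih]; push_cast; ring

lemma sum_expIntTermBound {d : ℕ} (hd : d ≤ ℓ) (ε : ℤ) :
    (∑ k : Fin ℓ, expIntTermBound ℓ d ε k : ℚ)
      = 2 * (d * (-ℓ * (d - 1) / 2 + (1 / 6) * (d + 1) * (d - (5 - 3 * ε) / 2))) := by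
  obtain ⟨a, rfl⟩ : ∃ a, ℓ = a + d := ⟨ℓ - d, by omega⟩
  rw [Fin.sum_univ_eq_sum_range (fun k => (expIntTermBound (a + d) d ε k : ℚ)), sum_range_add,
    sum_eq_zero fun k hk => by simp [expIntTermBound, (mem_range.1 hk).not_ge], zero_add]
  push_cast
  rw [← sum_range_expIntTermBound]
  refine sum_congr rfl fun t _ => ?_
  rw [expIntTermBound, if_pos (by omega)]
  push_cast
  ring

end ASH

theorem expInt_max_general (ℓ : ℕ) (ε : ℤ) (hε : ε = 1 ∨ ε = -1)
    (d : ℕ) (hd1 : 1 ≤ d) (hd2 : d ≤ ℓ - 1) :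
    ∃ π₀ : Equiv.Perm (Fin ℓ), (descents ℓ π₀).card = d ∧
      (expInt ℓ ε π₀ : ℚ)
        = (d : ℚ) * (-(ℓ : ℚ) * ((d : ℚ) - 1) / 2
            + (1 / 6 : ℚ) * ((d : ℚ) + 1) * ((d : ℚ) - (5 - 3 * (ε : ℚ)) / 2)) ∧
      (∀ π : Equiv.Perm (Fin ℓ), (descents ℓ π).card = d →
        expInt ℓ ε π ≤ expInt ℓ ε π₀) ∧
      (∀ π : Equiv.Perm (Fin ℓ), (descents ℓ π).card = d →
        expInt ℓ ε π = expInt ℓ ε π₀ → π = π₀) := by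
  have hd : d < ℓ := by omega
  have hodd : Odd ε := by rcases hε with rfl | rfl; exacts [odd_one, odd_one.neg]
  have hε1 : ε ≤ 1 := by omega
  have hπ₀ := ASH.incrThenMinima_extremalPerm ℓ d
  have hval₀ : 2 * expInt ℓ ε (ASH.extremalPerm ℓ d)
      = ∑ k : Fin ℓ, ASH.expIntTermBound ℓ d ε k := by
    rw [ASH.two_mul_expInt hodd]
    exact sum_congr rfl fun k _ => hπ₀.expIntTerm_eq hd k
  refine ⟨ASH.extremalPerm ℓ d, ?_, ?_, fun π hπ => ?_, fun π hπ heq => ?_⟩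
  · rw [hπ₀.descents_eq (by omega), Nat.card_Ico]
    omega
  · have := congrArg (Int.cast : ℤ → ℚ) hval₀
    push_cast at this
    rw [ASH.sum_expIntTermBound hd.le] at this
    linarith
  · have := sum_le_sum (s := univ) fun k _ => ASH.expIntTerm_le hε1 hπ k
    linarith [ASH.two_mul_expInt hodd π]
  · have hsum : ∑ k, ASH.expIntTerm ε π k
        = ∑ k : Fin ℓ, ASH.expIntTermBound ℓ d ε k := by
      rw [← ASH.two_mul_expInt hodd, heq, hval₀]
    have hterm := (sum_eq_sum_iff_of_le fun k _ => ASH.expIntTerm_le hε1 hπ k).1 hsum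
    exact (ASH.incrThenMinima_of_expIntTerm_eq hε1 hd hπ fun k => hterm k (mem_univ k)).eq hπ₀

/-- Among permutations `π ∈ S_ℓ` with `#D(π) = d`, the maximum of the attached exponent
equals `j_+^{(ε)}(ℓ,d) = d·(−ℓ(d−1)/2 + (1/6)(d+1)(d − (5−3ε)/2))`, attained by exactly
one permutation. -/
theorem expInt_max (ℓ : ℕ) (hℓ : 2 ≤ ℓ) (ε : ℤ) (hε : ε = 1 ∨ ε = -1)
    (d : ℕ) (hd1 : 1 ≤ d) (hd2 : d ≤ ℓ - 1) :
    ∃ π₀ : Equiv.Perm (Fin ℓ), (descents ℓ π₀).card = d ∧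
      (expInt ℓ ε π₀ : ℚ)
        = (d : ℚ) * (-(ℓ : ℚ) * ((d : ℚ) - 1) / 2
            + (1 / 6 : ℚ) * ((d : ℚ) + 1) * ((d : ℚ) - (5 - 3 * (ε : ℚ)) / 2)) ∧
      (∀ π : Equiv.Perm (Fin ℓ), (descents ℓ π).card = d →
        expInt ℓ ε π ≤ expInt ℓ ε π₀) ∧
      (∀ π : Equiv.Perm (Fin ℓ), (descents ℓ π).card = d →
        expInt ℓ ε π = expInt ℓ ε π₀ → π = π₀) :=
  expInt_max_general ℓ ε hε d hd1 hd2
end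

section
/- Let (H,K) with H ⊆ [0,ℓ−1], K ⊆ [1,ℓ−1], and define 𝔡(H,K) via the symmetric difference H△K = {j_1 < … < j_t} as the union of intervals [j_ν+1, j_{ν+1}] for odd ν (with j_{t+1} = ℓ). Then 𝔡(H†, K') = [1,ℓ] \ 𝔡(H,K), where H† = [0,ℓ−1]\H and K' = [1,ℓ−1]\K. -/
/-!
For `S ⊆ [0, ℓ-1]`, a point `x ∈ [1, ℓ]` lies in `𝔡 S` exactly when an odd number of elements
of `S` lie below `x`: the interval `[j_ν + 1, j_{ν+1}]` is the set of `x` with exactly `ν` of them.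
Since `H† △ K' = (H △ K) △ ([0, ℓ-1] △ [1, ℓ-1]) = (H △ K) △ {0}` and `0` lies below every
`x ≥ 1`, passing to `(H†, K')` flips all these parities.
-/

/-- For `S = {j_1 < … < j_t} ⊆ [0,ℓ−1]`, the set
`𝔡 = ⋃_{ν odd} [j_ν+1, j_{ν+1}]` with `j_{t+1} := ℓ` (ν is 1-based, so 0-based even). -/
def frakD (ℓ : ℕ) (S : Finset ℕ) : Finset ℕ :=
  let L := S.sort (· ≤ ·) ++ [ℓ]
  ((Finset.range S.card).filter fun ν => ν % 2 = 0).biUnion fun ν =>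
    Finset.Icc (L.getD ν 0 + 1) (L.getD (ν + 1) 0)

open Finset
open scoped symmDiff

namespace Nat

theorem nth_lt_iff_lt_count {p : ℕ → Prop} [DecidablePred p] {k n : ℕ}
    (hk : ∀ hf : (Set.ofPred p).Finite, k < #hf.toFinset) : nth p k < n ↔ k < count p n :=
  ⟨fun h => calc
      k < count p (nth p k + 1) := (count_nth_succ hk).symm ▸ k.lt_succ_self
      _ ≤ count p n := count_monotone p h,
    nth_lt_of_lt_count⟩

end Nat

namespace Finset

theorem getD_sort_lt_iff_lt_card_filter (S : Finset ℕ) {i : ℕ} (hi : i < #S) (x : ℕ) :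
    (S.sort (· ≤ ·)).getD i 0 < x ↔ i < #{s ∈ S | s < x} := by
  have hnth : Nat.nth (· ∈ S) i = (S.sort (· ≤ ·)).getD i 0 := by
    rw [Nat.nth_eq_getD_sort (p := (· ∈ S)) S.finite_toSet]
    congr
    exact finite_toSet_toFinset S
  have hcount : Nat.count (· ∈ S) x = #{s ∈ S | s < x} := by
    rw [Nat.count_eq_card_filter_range]
    congr 1
    ext s
    simp [and_comm]
  rw [← hnth, ← hcount, Nat.nth_lt_iff_lt_count]
  intro hf
  rwa [show hf.toFinset = S from finite_toSet_toFinset S]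

variable {α : Type*} [DecidableEq α]

theorem card_symmDiff_add_two_mul_card_inter (s t : Finset α) :
    #(s ∆ t) + 2 * #(s ∩ t) = #s + #t := by
  rw [symmDiff_def, sup_eq_union, card_union_of_disjoint disjoint_sdiff_sdiff]
  have := card_sdiff_add_card_inter s t
  have := card_sdiff_add_card_inter t s
  rw [inter_comm t s] at this
  omega

theorem odd_card_symmDiff_iff (s t : Finset α) :
    Odd #(s ∆ t) ↔ (Odd #s ↔ Even #t) := by
  rw [← Nat.odd_add, ← card_symmDiff_add_two_mul_card_inter, Nat.odd_add]
  simp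

theorem filter_symmDiff (p : α → Prop) [DecidablePred p] (s t : Finset α) :
    {x ∈ s ∆ t | p x} = {x ∈ s | p x} ∆ {x ∈ t | p x} := by
  ext; simp only [mem_filter, mem_symmDiff]; tauto

end Finset

theorem sdiff_symmDiff_sdiff {α : Type*} [GeneralizedBooleanAlgebra α] {a b c d : α}
    (hc : c ≤ a) (hd : d ≤ b) : (a \ c) ∆ (b \ d) = (c ∆ d) ∆ (a ∆ b) := by
  rw [← symmDiff_of_le hc, ← symmDiff_of_le hd, symmDiff_symmDiff_symmDiff_comm]

section frakD

variable {ℓ : ℕ} {S : Finset ℕ}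

theorem getD_sort_append_lt_iff {ν x : ℕ} (hν : ν ≤ #S) (hx : x ≤ ℓ) :
    (S.sort (· ≤ ·) ++ [ℓ]).getD ν 0 < x ↔ ν < #{s ∈ S | s < x} := by
  rcases hν.lt_or_eq with hν | rfl
  · rw [List.getD_append _ _ _ _ (by rwa [length_sort]), getD_sort_lt_iff_lt_card_filter S hν]
  · rw [List.getD_append_right _ _ _ _ (length_sort _).le]
    simp only [length_sort, Nat.sub_self, List.getD_cons_zero]
    exact iff_of_false hx.not_gt (card_filter_le _ _).not_gt

theorem getD_sort_append_le (hS : S ⊆ range ℓ) {ν : ℕ} (hν : ν ≤ #S) :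
    (S.sort (· ≤ ·) ++ [ℓ]).getD ν 0 ≤ ℓ := by
  rcases hν.lt_or_eq with hν | rfl
  · refine ((getD_sort_append_lt_iff hν.le le_rfl).2 ?_).le
    rwa [filter_true_of_mem fun s hs => mem_range.1 (hS hs)]
  · simp

theorem frakD_eq_filter_odd (hS : S ⊆ range ℓ) :
    frakD ℓ S = {x ∈ Icc 1 ℓ | Odd #{s ∈ S | s < x}} := by
  ext x
  simp only [frakD, mem_biUnion, mem_filter, mem_range, mem_Icc]
  have hcard : #{s ∈ S | s < x} ≤ #S := card_filter_le _ _
  constructor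
  · rintro ⟨ν, ⟨hν, hν_even⟩, hlo, hhi⟩
    have hxℓ : x ≤ ℓ := hhi.trans (getD_sort_append_le hS hν)
    have hlt := (getD_sort_append_lt_iff hν.le hxℓ).1 hlo
    have hge := (getD_sort_append_lt_iff hν hxℓ).not.1 (not_lt.2 hhi)
    exact ⟨⟨by omega, hxℓ⟩, ⟨ν / 2, by omega⟩⟩
  · rintro ⟨⟨hx, hxℓ⟩, k, hk⟩
    refine ⟨2 * k, ⟨by omega, by omega⟩, ?_, ?_⟩
    · exact (getD_sort_append_lt_iff (by omega) hxℓ).2 (by omega)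
    · exact not_lt.1 fun h => by have := (getD_sort_append_lt_iff (by omega) hxℓ).1 h; omega

end frakD

theorem filter_lt_range_symmDiff_Icc {ℓ x : ℕ} (hx : x ∈ Icc 1 ℓ) :
    {y ∈ range ℓ ∆ Icc 1 (ℓ - 1) | y < x} = {0} := by
  ext y
  simp only [mem_Icc] at hx
  simp only [mem_filter, mem_symmDiff, mem_range, mem_Icc, mem_singleton]
  omega

theorem frakD_compl_general (ℓ : ℕ) (H K : Finset ℕ)
    (hH : H ⊆ Finset.range ℓ) (hK : K ⊆ Finset.Icc 1 (ℓ - 1)) :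
    frakD ℓ (symmDiff (Finset.range ℓ \ H) (Finset.Icc 1 (ℓ - 1) \ K))
      = Finset.Icc 1 ℓ \ frakD ℓ (symmDiff H K) := by
  have hIcc : Icc 1 (ℓ - 1) ⊆ range ℓ := fun y hy => by
    simp only [mem_Icc, mem_range] at hy ⊢; omega
  have hHK : H ∆ K ⊆ range ℓ := symmDiff_le_sup.trans (union_subset hH (hK.trans hIcc))
  have hcompl : (range ℓ \ H) ∆ (Icc 1 (ℓ - 1) \ K) ⊆ range ℓ :=
    symmDiff_le_sup.trans (union_subset sdiff_subset (sdiff_subset.trans hIcc))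
  rw [frakD_eq_filter_odd hcompl, frakD_eq_filter_odd hHK, sdiff_symmDiff_sdiff hH hK]
  ext x
  simp only [mem_filter, mem_sdiff]
  refine and_congr_right fun hx => ?_
  rw [filter_symmDiff, odd_card_symmDiff_iff, filter_lt_range_symmDiff_Icc hx]
  simp [hx]

/-- With `H† = [0,ℓ−1]\H` and `K' = [1,ℓ−1]\K`, one has
`𝔡(H†, K') = [1,ℓ] \ 𝔡(H,K)` where `𝔡` is applied to the symmetric difference. -/
theorem frakD_compl (ℓ : ℕ) (hℓ : 1 ≤ ℓ) (H K : Finset ℕ)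
    (hH : H ⊆ Finset.range ℓ) (hK : K ⊆ Finset.Icc 1 (ℓ - 1)) :
    frakD ℓ (symmDiff (Finset.range ℓ \ H) (Finset.Icc 1 (ℓ - 1) \ K))
      = Finset.Icc 1 ℓ \ frakD ℓ (symmDiff H K) :=
  frakD_compl_general ℓ H K hH hK
end

section
/- Every even β-polarized lattice L in a p-adic quadratic space is a maximal lattice, and satisfies L̂ = μ(L)^{−1} L. -/
open Pointwise

/-- Every even `β`-polarized lattice `L` (i.e. `L̂ = cL` and `Q(v) ∈ c⁻¹ℤ_p` for all
`v ∈ L`, for some `c ∈ ℚ_p^×`) in a `p`-adic quadratic space is a maximal lattice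
(maximal among full lattices with the same norm), and satisfies `L̂ = μ(L)^{−1} L`,
where `μ(L) = p^m ℤ_p` is the norm of `L` and `L̂ = {v : β(v,L) ⊆ ℤ_p}`. -/
theorem even_polarized_is_maximal (p : ℕ) [Fact p.Prime]
    (V : Type*) [AddCommGroup V] [Module ℚ_[p] V] [FiniteDimensional ℚ_[p] V]
    [Module ℤ_[p] V] [IsScalarTower ℤ_[p] ℚ_[p] V]
    (β : V →ₗ[ℚ_[p]] V →ₗ[ℚ_[p]] ℚ_[p])
    (hsymm : ∀ v w : V, β v w = β w v)
    (hnd : ∀ v : V, (∀ w : V, β v w = 0) → v = 0)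
    (L : Submodule ℤ_[p] V) (hfg : L.FG)
    (hfull : Submodule.span ℚ_[p] (L : Set V) = ⊤)
    (m : ℤ)
    (hnorm : Submodule.span ℤ_[p] ((fun v : V => β v v / 2) '' (L : Set V))
        = Submodule.span ℤ_[p] {((p : ℚ_[p]) ^ m)})
    (c : ℚ_[p]) (hc : c ≠ 0)
    (hdual : {v : V | ∀ u ∈ L, β v u ∈ (algebraMap ℤ_[p] ℚ_[p]).range} = c • (L : Set V))
    (heven : ∀ v ∈ L, ∃ a : ℤ_[p], β v v / 2 = c⁻¹ * (a : ℚ_[p])) :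
    (∀ M : Submodule ℤ_[p] V, M.FG → L ≤ M →
        Submodule.span ℤ_[p] ((fun v : V => β v v / 2) '' (M : Set V))
          = Submodule.span ℤ_[p] ((fun v : V => β v v / 2) '' (L : Set V)) → M = L) ∧
    {v : V | ∀ u ∈ L, β v u ∈ (algebraMap ℤ_[p] ℚ_[p]).range}
      = ((p : ℚ_[p]) ^ (-m)) • (L : Set V) := by
  have hp0 : (p : ℚ_[p]) ≠ 0 := Nat.cast_ne_zero.mpr (Fact.out : p.Prime).ne_zero
  have hpm0 : ((p : ℚ_[p]) ^ m) ≠ 0 := zpow_ne_zero m hp0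
  set N := Submodule.span ℤ_[p] {((p : ℚ_[p]) ^ m)} with hN
  -- any element of N is a * p^m for some a ∈ ℤ_p
  have hNmem : ∀ x ∈ N, ∃ a : ℤ_[p], x = (a : ℚ_[p]) * (p : ℚ_[p]) ^ m := by
    intro x hx
    obtain ⟨a, ha⟩ := Submodule.mem_span_singleton.mp hx
    exact ⟨a, by rw [← ha, Algebra.smul_def, PadicInt.algebraMap_apply]⟩
  -- Q-values of L lie in N
  have hQ : ∀ v ∈ L, β v v / 2 ∈ N := by
    intro v hv
    have h : β v v / 2 ∈ Submodule.span ℤ_[p] ((fun v : V => β v v / 2) '' (L : Set V)) :=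
      Submodule.subset_span ⟨v, hv, rfl⟩
    rwa [hnorm] at h
  -- polarization identity
  have hexp : ∀ v u : V, β v u = β (v + u) (v + u) / 2 - β v v / 2 - β u u / 2 := by
    intro v u
    simp only [map_add, LinearMap.add_apply]
    rw [hsymm u v]
    ring
  have hβ : ∀ v ∈ L, ∀ u ∈ L, β v u ∈ N := by
    intro v hv u hu
    rw [hexp]
    exact sub_mem (sub_mem (hQ _ (L.add_mem hv hu)) (hQ _ hv)) (hQ _ hu)
  -- c * p^m is a p-adic integer
  have hsub : Submodule.span ℤ_[p] ((fun v : V => β v v / 2) '' (L : Set V))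
      ≤ Submodule.span ℤ_[p] {c⁻¹} := by
    rw [Submodule.span_le]
    rintro x ⟨v, hv, rfl⟩
    obtain ⟨a, ha⟩ := heven v hv
    refine Submodule.mem_span_singleton.mpr ⟨a, ?_⟩
    show (a : ℤ_[p]) • c⁻¹ = β v v / 2
    rw [Algebra.smul_def, PadicInt.algebraMap_apply, ha]; ring
  have hpmc : ∃ a : ℤ_[p], c * (p : ℚ_[p]) ^ m = (a : ℚ_[p]) := by
    have h : ((p : ℚ_[p]) ^ m) ∈ Submodule.span ℤ_[p] {c⁻¹} :=
      hsub (hnorm ▸ Submodule.mem_span_singleton_self _)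
    obtain ⟨a, ha⟩ := Submodule.mem_span_singleton.mp h
    refine ⟨a, ?_⟩
    rw [← ha, Algebra.smul_def, PadicInt.algebraMap_apply]
    field_simp
  -- the dual set equality
  have hset : {v : V | ∀ u ∈ L, β v u ∈ (algebraMap ℤ_[p] ℚ_[p]).range}
      = ((p : ℚ_[p]) ^ (-m)) • (L : Set V) := by
    apply Set.Subset.antisymm
    · intro v hv
      rw [hdual, Set.mem_smul_set] at hv
      obtain ⟨w, hw, rfl⟩ := hv
      obtain ⟨a, ha⟩ := hpmc
      rw [Set.mem_smul_set]
      refine ⟨a • w, L.smul_mem a hw, ?_⟩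
      have hsw : (a • w : V) = ((a : ℚ_[p])) • w := by
        rw [← PadicInt.algebraMap_apply, algebraMap_smul]
      have hsc : (p : ℚ_[p]) ^ (-m) * (c * (p : ℚ_[p]) ^ m) = c := by
        rw [zpow_neg]
        field_simp
      rw [hsw, smul_smul, ← ha, hsc]
    · intro v hv
      rw [Set.mem_smul_set] at hv
      obtain ⟨w, hw, rfl⟩ := hv
      intro u hu
      obtain ⟨a, ha⟩ := hNmem _ (hβ w hw u hu)
      refine ⟨a, ?_⟩
      rw [PadicInt.algebraMap_apply, map_smul, LinearMap.smul_apply, smul_eq_mul, ha, zpow_neg]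
      field_simp
  refine ⟨?_, hset⟩
  -- maximality
  intro M hMfg hLM hMnorm
  have hQM : ∀ v ∈ M, β v v / 2 ∈ N := by
    intro v hv
    have h : β v v / 2 ∈ Submodule.span ℤ_[p] ((fun v : V => β v v / 2) '' (M : Set V)) :=
      Submodule.subset_span ⟨v, hv, rfl⟩
    rwa [hMnorm, hnorm] at h
  have hβM : ∀ v ∈ M, ∀ u ∈ M, β v u ∈ N := by
    intro v hv u hu
    rw [hexp]
    exact sub_mem (sub_mem (hQM _ (M.add_mem hv hu)) (hQM _ hv)) (hQM _ hu)
  apply le_antisymm _ hLM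
  intro w hw
  have hmem : (p : ℚ_[p]) ^ (-m) • w
      ∈ {v : V | ∀ u ∈ L, β v u ∈ (algebraMap ℤ_[p] ℚ_[p]).range} := by
    intro u hu
    obtain ⟨a, ha⟩ := hNmem _ (hβM w hw u (hLM hu))
    refine ⟨a, ?_⟩
    rw [PadicInt.algebraMap_apply, map_smul, LinearMap.smul_apply, smul_eq_mul, ha, zpow_neg]
    field_simp
  rw [hset, Set.mem_smul_set] at hmem
  obtain ⟨x, hx, hxe⟩ := hmem
  have hxw : x = w := smul_right_injective V (zpow_ne_zero (-m) hp0) hxe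
  rwa [← hxw]
end
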